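/- arXiv:2408.14246 — 6 statements merged into one kernel-verified Lean document; each statement's English description precedes it below -/
import Mathlib

section
/- For c ∈ ℝ, the radial function w_c(x) = (q/b) ln( q m^{1/q} / (b a^{1/q} |x| + q m^{1/q} e^{-bc/q}) ) satisfies a e^{b w_c} = m |∇w_c|^q in ℝ² \ {0}, and w_c(0) = c (extended by continuity). -/
open Real

/-! The profile `φ(r) = w(x)`, `r = ‖x‖`, solves the first-order ODE `φ' = -(a/m)^{1/q} e^{bφ/q}`,
since `e^{bφ/q}` is the reciprocal of an affine function of `r`. Raising it to the power `q` gives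
`m |φ'|^q = a e^{bφ}`, and away from the origin `‖∇w(x)‖ = |φ'(‖x‖)|` because the derivative of
the norm has operator norm one there. -/

theorem norm_gradient_comp_norm {E : Type*} [NormedAddCommGroup E] [InnerProductSpace ℝ E]
    [CompleteSpace E] {φ : ℝ → ℝ} {φ' : ℝ} {x : E} (hφ : HasDerivAt φ φ' ‖x‖) (hx : x ≠ 0) :
    ‖gradient (fun y => φ ‖y‖) x‖ = |φ'| := by
  have : Nontrivial E := ⟨⟨x, 0, hx⟩⟩
  have hnorm : DifferentiableAt ℝ (‖·‖) x :=
    (contDiffAt_norm ℝ (n := 1) hx).differentiableAt one_ne_zero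
  have hcomp : HasFDerivAt (fun y => φ ‖y‖) (φ' • fderiv ℝ (‖·‖) x) x :=
    hφ.comp_hasFDerivAt x hnorm.hasFDerivAt
  rw [gradient, LinearIsometryEquiv.norm_map, hcomp.fderiv,
    norm_smul, norm_fderiv_norm hnorm, mul_one, Real.norm_eq_abs]

theorem mul_exp_eq_mul_abs_rpow {a m q : ℝ} (ha : 0 ≤ a) (hm : 0 < m) (hq : q ≠ 0) (t : ℝ) :
    a * exp t = m * |(a / m) ^ q⁻¹ * exp (t / q)| ^ q := by
  rw [abs_of_nonneg (by positivity), mul_rpow (by positivity) (exp_pos _).le,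
    rpow_inv_rpow (by positivity) hq, ← exp_mul, div_mul_cancel₀ _ hq]
  field_simp

noncomputable def radialProfile (m a b q c r : ℝ) : ℝ :=
  (q / b) * log (q * m ^ (1 / q) / (b * a ^ (1 / q) * r + q * m ^ (1 / q) * exp (-(b * c) / q)))

section
variable {m a b q c : ℝ}

theorem radialProfile_zero (hm : 0 < m) (hb : b ≠ 0) (hq : q ≠ 0) :
    radialProfile m a b q c 0 = c := by
  have : q * m ^ (1 / q) ≠ 0 := mul_ne_zero hq (rpow_pos_of_pos hm _).ne'
  rw [radialProfile, mul_zero, zero_add, div_mul_cancel_left₀ this, ← exp_neg, neg_div, neg_neg,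
    log_exp]
  field_simp

theorem hasDerivAt_radialProfile (hm : 0 < m) (ha : 0 < a) (hb : 0 < b) (hq : 0 < q) {r : ℝ}
    (hr : 0 ≤ r) :
    HasDerivAt (radialProfile m a b q c)
      (-((a / m) ^ q⁻¹ * exp (b * radialProfile m a b q c r / q))) r := by
  set A := a ^ (1 / q)
  set M := m ^ (1 / q)
  set D := b * A * r + q * M * exp (-(b * c) / q)
  have hA : 0 < A := rpow_pos_of_pos ha _
  have hM : 0 < M := rpow_pos_of_pos hm _
  have hD : 0 < D := by positivity
  have hlin : HasDerivAt (fun r => b * A * r + q * M * exp (-(b * c) / q)) (b * A) r := by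
    simpa using ((hasDerivAt_id r).const_mul (b * A)).add_const (q * M * exp (-(b * c) / q))
  have hexp : exp (b * radialProfile m a b q c r / q) = q * M / D := by
    have hlog : b * radialProfile m a b q c r / q = log (q * M / D) := by
      change b * (q / b * log (q * M / D)) / q = _
      field_simp
    rw [hlog, exp_log (by positivity)]
  have hAM : (a / m) ^ q⁻¹ = A / M := by rw [← one_div, div_rpow ha.le hm.le]
  rw [hexp, hAM]
  have hquot : HasDerivAt (fun r => q * M / (b * A * r + q * M * exp (-(b * c) / q)))
      (-(q * M * (b * A)) / D ^ 2) r := by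
    simpa using (hasDerivAt_const r (q * M)).fun_div hlin hD.ne'
  refine ((hquot.log (div_pos (by positivity) hD).ne').const_mul (q / b)).congr_deriv ?_
  change q / b * (_ / (q * M / D)) = _
  field_simp
end

/-- For `c ∈ ℝ`, the radial function
`w_c(x) = (q/b) ln(q m^{1/q} / (b a^{1/q}|x| + q m^{1/q} e^{-bc/q}))`
satisfies `a e^{b w_c} = m |∇ w_c|^q` in `ℝ² \ {0}` and `w_c(0) = c`. -/
theorem stmt1 (m a b q c : ℝ) (hm : 0 < m) (ha : 0 < a) (hb : 0 < b) (hq : 2 < q)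
    (w : EuclideanSpace ℝ (Fin 2) → ℝ)
    (hw : ∀ x, w x = (q / b) *
      Real.log (q * m ^ (1 / q) /
        (b * a ^ (1 / q) * ‖x‖ + q * m ^ (1 / q) * Real.exp (-(b * c) / q)))) :
    (∀ x : EuclideanSpace ℝ (Fin 2), x ≠ 0 →
      a * Real.exp (b * w x) = m * ‖gradient w x‖ ^ q) ∧ w 0 = c := by
  have hq0 : 0 < q := by linarith
  obtain rfl : w = fun x => radialProfile m a b q c ‖x‖ := funext hw
  refine ⟨fun x hx => ?_, by simpa only [norm_zero] using radialProfile_zero hm hb.ne' hq0.ne'⟩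
  rw [norm_gradient_comp_norm (hasDerivAt_radialProfile hm ha hb hq0 (norm_nonneg x)) hx, abs_neg]
  exact mul_exp_eq_mul_abs_rpow ha.le hm hq0.ne' _
end

section
/- For κ ∈ ℝ, the radial function ψ_κ(r) = (2/b)(ln(1/r) - ln(1 - ln r)) + κ on the punctured unit disk of ℝ² satisfies -Δψ_κ + a e^{bψ_κ} = (a e^{bκ} - 2/b) · 1/(|x|²(1-ln|x|)²) pointwise on B₁ \ {0}. -/
/-!
`ψ_κ(x) = g(|x|)` is radial, and for a radial function on `ℝⁿ \ {0}` the Hessian splits into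
the radial part `g''` and `n - 1` tangential parts `g'/r`, so `Δψ_κ = g'' + g'/r` in the plane.
With `L = log r`, `g' = (2/b) L / (r(1-L))` and `g'' = (2/b)(1 - L + L²) / (r²(1-L)²)`, which
add up to `Δψ_κ = (2/b) / (r²(1-L)²)`; and `e^{bψ_κ} = e^{bκ} / (r²(1-L)²)` straight from the
definition.
-/

/-- Laplacian of a function on `ℝⁿ` as the sum of pure second derivatives. -/
noncomputable def laplacian {n : ℕ} (u : EuclideanSpace ℝ (Fin n) → ℝ)
    (x : EuclideanSpace ℝ (Fin n)) : ℝ :=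
  ∑ i : Fin n, iteratedFDeriv ℝ 2 u x ![EuclideanSpace.single i 1, EuclideanSpace.single i 1]

open Real Filter Topology ContinuousLinearMap

section Radial

variable {E : Type*} [NormedAddCommGroup E] [InnerProductSpace ℝ E]

theorem hasFDerivAt_norm_of_ne_zero {x : E} (hx : x ≠ 0) :
    HasFDerivAt (‖·‖) (‖x‖⁻¹ • innerSL ℝ x) x := by
  have hx' : ‖x‖ ≠ 0 := norm_ne_zero_iff.mpr hx
  have h := (hasStrictFDerivAt_norm_sq x).hasFDerivAt.sqrt (pow_ne_zero 2 hx')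
  simp only [sqrt_sq (norm_nonneg _)] at h
  refine h.congr_fderiv ?_
  ext v
  simp only [one_div, mul_inv_rev, smul_apply, coe_innerSL_apply,
    nsmul_eq_mul, Nat.cast_ofNat, smul_eq_mul]
  field_simp

variable {g g' : ℝ → ℝ} {g'' : ℝ} {x : E}

theorem eventually_hasFDerivAt_comp_norm (hx : x ≠ 0)
    (hg : ∀ᶠ r in 𝓝 ‖x‖, HasDerivAt g (g' r) r) :
    ∀ᶠ y in 𝓝 x, HasFDerivAt (fun y => g ‖y‖) ((g' ‖y‖ / ‖y‖) • innerSL ℝ y) y := by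
  filter_upwards [continuous_norm.continuousAt.eventually hg, eventually_ne_nhds hx]
    with y hgy hy
  refine (hgy.comp_hasFDerivAt y (hasFDerivAt_norm_of_ne_zero hy)).congr_fderiv ?_
  rw [smul_smul, div_eq_mul_inv]

theorem fderiv_fderiv_comp_norm_apply (hx : x ≠ 0)
    (hg : ∀ᶠ r in 𝓝 ‖x‖, HasDerivAt g (g' r) r) (hg' : HasDerivAt g' g'' ‖x‖) (e : E) :
    fderiv ℝ (fderiv ℝ (fun y => g ‖y‖)) x e e =
      g'' * (inner ℝ x e / ‖x‖) ^ 2 + g' ‖x‖ / ‖x‖ * (‖e‖ ^ 2 - (inner ℝ x e / ‖x‖) ^ 2) := by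
  have hx' : ‖x‖ ≠ 0 := norm_ne_zero_iff.mpr hx
  have hfderiv : fderiv ℝ (fun y => g ‖y‖) =ᶠ[𝓝 x] fun y => (g' ‖y‖ / ‖y‖) • innerSL ℝ y :=
    (eventually_hasFDerivAt_comp_norm hx hg).mono fun y hy => hy.fderiv
  have hquot : HasDerivAt (fun r => g' r / r) ((g'' * ‖x‖ - g' ‖x‖) / ‖x‖ ^ 2) ‖x‖ := by
    simpa using hg'.fun_div (hasDerivAt_id' ‖x‖) hx'
  have h2 : HasFDerivAt (fun y => (g' ‖y‖ / ‖y‖) • innerSL ℝ y) _ x :=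
    (hquot.comp_hasFDerivAt x (hasFDerivAt_norm_of_ne_zero hx)).fun_smul
      (innerSL ℝ (E := E)).hasFDerivAt
  rw [hfderiv.fderiv_eq, h2.fderiv]
  simp only [Function.comp_apply, add_apply, smul_apply,
    ContinuousLinearMap.smulRight_apply, innerSL_apply_apply, real_inner_comm e x, smul_eq_mul]
  rw [innerSL_apply_apply, real_inner_self_eq_norm_sq]
  field_simp
  ring

end Radial

theorem laplacian_comp_norm {n : ℕ} {g g' : ℝ → ℝ} {g'' : ℝ} {x : EuclideanSpace ℝ (Fin n)}
    (hx : x ≠ 0) (hg : ∀ᶠ r in 𝓝 ‖x‖, HasDerivAt g (g' r) r) (hg' : HasDerivAt g' g'' ‖x‖) :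
    laplacian (fun y => g ‖y‖) x = g'' + (n - 1) / ‖x‖ * g' ‖x‖ := by
  have hx' : ‖x‖ ≠ 0 := norm_ne_zero_iff.mpr hx
  simp only [laplacian, iteratedFDeriv_two_apply, Matrix.cons_val_zero, Matrix.cons_val_one,
    fderiv_fderiv_comp_norm_apply hx hg hg', EuclideanSpace.inner_single_right]
  simp only [conj_trivial, one_mul, div_pow, PiLp.norm_single, norm_one, one_pow,
    Finset.sum_add_distrib, ← Finset.mul_sum, ← Finset.sum_div, ← EuclideanSpace.real_norm_sq_eq,
    Finset.sum_sub_distrib, Finset.sum_const, Finset.card_univ, Fintype.card_fin, nsmul_eq_mul,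
    mul_one]
  field_simp

noncomputable def psiProfile (b κ r : ℝ) : ℝ := 2 / b * (log (1 / r) - log (1 - log r)) + κ

theorem hasDerivAt_psiProfile (b κ : ℝ) {r : ℝ} (hr : r ≠ 0) (hlog : log r ≠ 1) :
    HasDerivAt (psiProfile b κ) (2 / b * (log r / (r * (1 - log r)))) r := by
  have hlog' : 1 - log r ≠ 0 := sub_ne_zero.mpr hlog.symm
  have hprofile : psiProfile b κ = fun r => 2 / b * (-log r - log (1 - log r)) + κ := by
    funext r
    rw [psiProfile, one_div, log_inv]
  rw [hprofile]
  refine ((((hasDerivAt_log hr).fun_neg.fun_sub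
    ((hasDerivAt_log hr).const_sub 1 |>.log hlog')).const_mul (2 / b)).add_const κ).congr_deriv ?_
  field_simp
  ring

theorem hasDerivAt_psiProfile_deriv (b : ℝ) {r : ℝ} (hr : r ≠ 0) (hlog : log r ≠ 1) :
    HasDerivAt (fun r => 2 / b * (log r / (r * (1 - log r))))
      (2 / b * ((1 - log r + log r ^ 2) / (r ^ 2 * (1 - log r) ^ 2))) r := by
  have hlog' : 1 - log r ≠ 0 := sub_ne_zero.mpr hlog.symm
  have hden : HasDerivAt (fun r => r * (1 - log r)) (-log r) r := by
    refine ((hasDerivAt_id' r).fun_mul ((hasDerivAt_log hr).const_sub 1)).congr_deriv ?_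
    field_simp
    ring
  refine (((hasDerivAt_log hr).fun_div hden (mul_ne_zero hr hlog')).const_mul
    (2 / b)).congr_deriv ?_
  field_simp
  ring

theorem exp_mul_psiProfile {b : ℝ} (κ : ℝ) (hb : b ≠ 0) {r : ℝ} (hr : r ≠ 0) (hlog : log r ≠ 1) :
    exp (b * psiProfile b κ r) = exp (b * κ) / (r ^ 2 * (1 - log r) ^ 2) := by
  have hlog' : 1 - log r ≠ 0 := sub_ne_zero.mpr hlog.symm
  have hexp : b * psiProfile b κ r = log ((1 / r) ^ 2) - log ((1 - log r) ^ 2) + b * κ := by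
    rw [psiProfile, log_pow, log_pow]
    field_simp
    push_cast
    ring
  rw [hexp, exp_add, exp_sub, exp_log (by positivity), exp_log (by positivity)]
  field_simp

theorem laplacian_psiProfile {b : ℝ} (κ : ℝ) {x : EuclideanSpace ℝ (Fin 2)} (hx : x ≠ 0)
    (hlog : log ‖x‖ ≠ 1) :
    laplacian (fun y => psiProfile b κ ‖y‖) x = 2 / b / (‖x‖ ^ 2 * (1 - log ‖x‖) ^ 2) := by
  have hr : ‖x‖ ≠ 0 := norm_ne_zero_iff.mpr hx
  have hderiv : ∀ᶠ r in 𝓝 ‖x‖,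
      HasDerivAt (psiProfile b κ) (2 / b * (log r / (r * (1 - log r)))) r := by
    filter_upwards [eventually_ne_nhds hr, (continuousAt_log hr).eventually_ne hlog] with r hr hlog
    exact hasDerivAt_psiProfile b κ hr hlog
  rw [laplacian_comp_norm hx hderiv (hasDerivAt_psiProfile_deriv b hr hlog)]
  field_simp
  ring

theorem stmt3_general (a b κ : ℝ) (hb : 0 < b)
    (ψ : EuclideanSpace ℝ (Fin 2) → ℝ)
    (hψ : ∀ x, ψ x = (2 / b) * (Real.log (1 / ‖x‖) - Real.log (1 - Real.log ‖x‖)) + κ) :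
    ∀ x : EuclideanSpace ℝ (Fin 2), 0 < ‖x‖ → ‖x‖ < 1 →
      -(laplacian ψ x) + a * Real.exp (b * ψ x) =
        (a * Real.exp (b * κ) - 2 / b) * (1 / (‖x‖ ^ 2 * (1 - Real.log ‖x‖) ^ 2)) := by
  intro x hx0 hx1
  have hlog : log ‖x‖ ≠ 1 := ((log_neg hx0 hx1).trans one_pos).ne
  obtain rfl : ψ = fun y => psiProfile b κ ‖y‖ := funext hψ
  rw [laplacian_psiProfile κ (norm_pos_iff.mp hx0) hlog,
    exp_mul_psiProfile κ hb.ne' hx0.ne' hlog]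
  ring

/-- For `κ ∈ ℝ`, the radial function `ψ_κ(r) = (2/b)(ln(1/r) - ln(1 - ln r)) + κ` on the
punctured unit disk of `ℝ²` satisfies
`-Δψ_κ + a e^{bψ_κ} = (a e^{bκ} - 2/b) / (|x|²(1-ln|x|)²)` pointwise on `B₁ \ {0}`. -/
theorem stmt3 (a b κ : ℝ) (ha : 0 < a) (hb : 0 < b)
    (ψ : EuclideanSpace ℝ (Fin 2) → ℝ)
    (hψ : ∀ x, ψ x = (2 / b) * (Real.log (1 / ‖x‖) - Real.log (1 - Real.log ‖x‖)) + κ) :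
    ∀ x : EuclideanSpace ℝ (Fin 2), 0 < ‖x‖ → ‖x‖ < 1 →
      -(laplacian ψ x) + a * Real.exp (b * ψ x) =
        (a * Real.exp (b * κ) - 2 / b) * (1 / (‖x‖ ^ 2 * (1 - Real.log ‖x‖) ^ 2)) :=
  stmt3_general a b κ hb ψ hψ
end

section
/- Let 1 < q < 2, m > 0, and u : (0,1] → ℝ be a C² decreasing function satisfying -u'' - u'/r - m|u'|^q ≤ 0 on (0,1) with u' < 0. Then the function r ↦ r^{1-q}|u'(r)|^{1-q} + m((q-1)/(2-q)) r^{2-q} is nondecreasing on (0,1). -/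
/-!
Put `v = -r u'`. The inequality says `v' = r (-u'' - u'/r) ≤ m r |u'|^q = m r^{1-q} v^q`,
so, since `1 - q < 0`, `(v^{1-q})' = (1-q) v^{-q} v' ≥ (1-q) m r^{1-q}`, which is exactly
`-(m (q-1)/(2-q) r^{2-q})'`.
-/

open Real Set

theorem MonotoneOn.of_hasDerivAt_nonneg {s : Set ℝ} (hs : Convex ℝ s) (hso : IsOpen s)
    {f f' : ℝ → ℝ} (hf : ∀ x ∈ s, HasDerivAt f (f' x) x) (hf' : ∀ x ∈ s, 0 ≤ f' x) :
    MonotoneOn f s := by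
  refine monotoneOn_of_hasDerivWithinAt_nonneg (f' := f') hs
    (fun x hx => (hf x hx).continuousAt.continuousWithinAt) (fun x hx => ?_) (fun x hx => ?_)
  · rw [hso.interior_eq] at hx
    exact (hf x hx).hasDerivWithinAt
  · rw [hso.interior_eq] at hx
    exact hf' x hx

theorem ContDiffOn.hasDerivAt_deriv {f : ℝ → ℝ} {s : Set ℝ} (hf : ContDiffOn ℝ 2 f s)
    (hs : IsOpen s) {x : ℝ} (hx : x ∈ s) : HasDerivAt (deriv f) (deriv (deriv f) x) x :=
  (((hf.deriv_of_isOpen hs (by norm_num)).differentiableOn one_ne_zero x hx).differentiableAt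
    (hs.mem_nhds hx)).hasDerivAt

theorem hasDerivAt_mul_rpow_one_sub_add {m q r d : ℝ} {w : ℝ → ℝ} (hq : q ≠ 2)
    (hr : 0 < r) (hw : 0 < w r) (hd : HasDerivAt (fun x => x * w x) d r) :
    HasDerivAt (fun x => (x * w x) ^ (1 - q) + m * ((q - 1) / (2 - q)) * x ^ (2 - q))
      ((1 - q) * (r * w r) ^ (-q) * d + m * (q - 1) * r ^ (1 - q)) r := by
  have hpow := (hasDerivAt_rpow_const (p := 2 - q) (Or.inl hr.ne')).const_mul
    (m * ((q - 1) / (2 - q)))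
  refine ((hd.rpow_const (p := 1 - q) (Or.inl (mul_pos hr hw).ne')).add hpow).congr_deriv ?_
  have h2q : (2 : ℝ) - q ≠ 0 := sub_ne_zero.mpr hq.symm
  rw [show (1 : ℝ) - q - 1 = -q by ring, show (2 : ℝ) - q - 1 = 1 - q by ring]
  field_simp

theorem mul_rpow_one_sub_add_nonneg {m q r w d : ℝ} (hq : 1 ≤ q) (hr : 0 < r)
    (hw : 0 < w) (hd : d ≤ m * r * w ^ q) :
    0 ≤ (1 - q) * (r * w) ^ (-q) * d + m * (q - 1) * r ^ (1 - q) := by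
  have hcancel : (r * w) ^ (-q) * (m * r * w ^ q) = m * r ^ (1 - q) := by
    rw [mul_rpow hr.le hw.le, rpow_neg hr.le, rpow_neg hw.le, rpow_sub hr, rpow_one]
    field_simp
  have hneg : (1 - q) * (r * w) ^ (-q) ≤ 0 :=
    mul_nonpos_of_nonpos_of_nonneg (by linarith) (rpow_nonneg (mul_pos hr hw).le _)
  have h := mul_le_mul_of_nonpos_left hd hneg
  rw [mul_assoc, hcancel] at h
  linarith

theorem monotoneOn_rpow_one_sub_mul_add {m q : ℝ} (hq1 : 1 ≤ q) (hq2 : q ≠ 2) {s : Set ℝ}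
    (hs : Convex ℝ s) (hso : IsOpen s) (hs0 : s ⊆ Ioi 0) {w d : ℝ → ℝ}
    (hw : ∀ r ∈ s, 0 < w r) (hd : ∀ r ∈ s, HasDerivAt (fun x => x * w x) (d r) r)
    (hdle : ∀ r ∈ s, d r ≤ m * r * w r ^ q) :
    MonotoneOn (fun r => r ^ (1 - q) * w r ^ (1 - q) + m * ((q - 1) / (2 - q)) * r ^ (2 - q))
      s := by
  refine (MonotoneOn.of_hasDerivAt_nonneg hs hso
    (fun r hr => hasDerivAt_mul_rpow_one_sub_add hq2 (hs0 hr) (hw r hr) (hd r hr))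
    (fun r hr => mul_rpow_one_sub_add_nonneg hq1 (hs0 hr) (hw r hr) (hdle r hr))).congr
    (fun r hr => ?_)
  simp only [mul_rpow (le_of_lt (hs0 hr)) (hw r hr).le]

theorem stmt6_general (m q : ℝ) (hq1 : 1 < q) (hq2 : q < 2)
    (u : ℝ → ℝ) (hu : ContDiffOn ℝ 2 u (Set.Ioo 0 1))
    (hu' : ∀ r ∈ Set.Ioo (0 : ℝ) 1, deriv u r < 0)
    (hineq : ∀ r ∈ Set.Ioo (0 : ℝ) 1,
      -(deriv (deriv u) r) - deriv u r / r - m * |deriv u r| ^ q ≤ 0) :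
    MonotoneOn
      (fun r => r ^ (1 - q) * |deriv u r| ^ (1 - q) + m * ((q - 1) / (2 - q)) * r ^ (2 - q))
      (Set.Ioo (0 : ℝ) 1) := by
  refine monotoneOn_rpow_one_sub_mul_add (w := fun r => |deriv u r|)
    (d := fun r => -deriv u r - r * deriv (deriv u) r) hq1.le hq2.ne (convex_Ioo 0 1) isOpen_Ioo
    Ioo_subset_Ioi_self (fun r hr => abs_pos.mpr (hu' r hr).ne) (fun r hr => ?_) (fun r hr => ?_)
  · have habs : (fun x => x * |deriv u x|) =ᶠ[nhds r] fun x => x * -deriv u x := by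
      filter_upwards [isOpen_Ioo.mem_nhds hr] with x hx
      rw [abs_of_neg (hu' x hx)]
    have hprod := (hasDerivAt_id' r).mul (hu.hasDerivAt_deriv isOpen_Ioo hr).neg
    refine (hprod.congr_of_eventuallyEq habs).congr_deriv ?_
    rw [Pi.neg_apply]
    ring
  · have hr0 : r ≠ 0 := hr.1.ne'
    have hfactor : -deriv u r - r * deriv (deriv u) r
        = r * (-deriv (deriv u) r - deriv u r / r) := by
      field_simp
      ring
    rw [hfactor, mul_comm m r, mul_assoc]
    exact mul_le_mul_of_nonneg_left (by linarith [hineq r hr]) hr.1.le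

/-- If `1 < q < 2`, `m > 0` and `u` is a `C²` decreasing function on `(0,1]` with `u' < 0`
satisfying `-u'' - u'/r - m|u'|^q ≤ 0` on `(0,1)`, then
`r ↦ r^{1-q}|u'(r)|^{1-q} + m((q-1)/(2-q)) r^{2-q}` is nondecreasing on `(0,1)`. -/
theorem stmt6 (m q : ℝ) (hm : 0 < m) (hq1 : 1 < q) (hq2 : q < 2)
    (u : ℝ → ℝ) (hu : ContDiffOn ℝ 2 u (Set.Ioo 0 1))
    (hdec : StrictAntiOn u (Set.Ioc 0 1))
    (hu' : ∀ r ∈ Set.Ioo (0 : ℝ) 1, deriv u r < 0)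
    (hineq : ∀ r ∈ Set.Ioo (0 : ℝ) 1,
      -(deriv (deriv u) r) - deriv u r / r - m * |deriv u r| ^ q ≤ 0) :
    MonotoneOn
      (fun r => r ^ (1 - q) * |deriv u r| ^ (1 - q) + m * ((q - 1) / (2 - q)) * r ^ (2 - q))
      (Set.Ioo (0 : ℝ) 1) :=
  stmt6_general m q hq1 hq2 u hu hu' hineq
end

section
/- Let 1 < q < 2. If u is a C² radial decreasing solution of -u'' - u'/r + a e^{bu} - m|u'|^q = 0 on (0,1) with u ≥ 0, and if limsup_{r→0} (u(r) + A ln r) < ∞ for every A > 0 fails only when lim_{r→0} r|u'(r)| = ∞, then assuming the a priori bound u(r) ≤ (2/b) ln(1/r) + Λ for some Λ, there exists c = c(m,q) > 0 with |u'(r)| ≤ c/r for all 0 < r ≤ r₀ < 1. -/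
/-!
Write `w(r) = -r u'(r) ≥ 0`; the equation says `w' = r (m |u'|^q - a e^{bu})`.
The a priori bound gives `a r e^{bu} ≤ C / r`, so `w + C log r` is increasing and `w` grows at
most logarithmically, hence like `r^{-ε}` for any `ε > 0`. With `ε = (2 - q)/(2q)` this makes
`r m |u'|^q = m r^{1-q} w^q ≤ D' r^{-q/2}` integrable at `0`, so `w - D r^{1-q/2}` is decreasing.
Thus `w ≥ μ := w(ρ) - D ρ^{1-q/2}` on `(0, ρ]`, i.e. `u(r) ≥ μ log(1/r) - O(1)`, and the a priori
bound forces `μ ≤ 2/b`, so `w(ρ) ≤ 2/b + D`.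
-/

open Real Set Filter Topology

lemma monotoneOn_Ioc_of_hasDerivAt_nonneg {f f' : ℝ → ℝ} {a b : ℝ}
    (hf : ∀ x ∈ Ioc a b, HasDerivAt f (f' x) x) (hf' : ∀ x ∈ Ioo a b, 0 ≤ f' x) :
    MonotoneOn f (Ioc a b) := by
  refine monotoneOn_of_hasDerivWithinAt_nonneg (convex_Ioc a b)
    (fun x hx => (hf x hx).continuousAt.continuousWithinAt) (fun x hx => ?_)
    (by rwa [interior_Ioc])
  rw [interior_Ioc] at hx ⊢
  exact (hf x (Ioo_subset_Ioc_self hx)).hasDerivWithinAt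

lemma le_add_mul_log_sub_log_of_hasDerivAt {f f' : ℝ → ℝ} {C R s : ℝ}
    (hf : ∀ x ∈ Ioc 0 R, HasDerivAt f (f' x) x) (hf' : ∀ x ∈ Ioo 0 R, -(C / x) ≤ f' x)
    (hs : s ∈ Ioc 0 R) : f s ≤ f R + C * (log R - log s) := by
  have hmono : MonotoneOn (fun x => f x + C * log x) (Ioc 0 R) :=
    monotoneOn_Ioc_of_hasDerivAt_nonneg
      (fun x hx => (hf x hx).add ((hasDerivAt_log hx.1.ne').const_mul C))
      (fun x hx => by have := hf' x hx; rw [div_eq_mul_inv] at this; linarith)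
  have : f s + C * log s ≤ f R + C * log R := hmono hs ⟨hs.1.trans_le hs.2, le_rfl⟩ hs.2
  linarith

lemma le_mul_rpow_neg_of_hasDerivAt {f f' : ℝ → ℝ} {C R ε s : ℝ} (hC : 0 ≤ C) (hR : R ≤ 1)
    (hε : 0 < ε) (hfR : 0 ≤ f R)
    (hf : ∀ x ∈ Ioc 0 R, HasDerivAt f (f' x) x) (hf' : ∀ x ∈ Ioo 0 R, -(C / x) ≤ f' x)
    (hs : s ∈ Ioc 0 R) : f s ≤ (f R + C / ε) * s ^ (-ε) := by
  have hs0 := hs.1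
  have hpow : 1 ≤ s ^ (-ε) := by
    rw [rpow_neg hs0.le, ← inv_rpow hs0.le]
    exact one_le_rpow ((one_le_inv₀ hs0).2 (hs.2.trans hR)) hε.le
  have hlog : log R - log s ≤ s ^ (-ε) / ε := calc
    log R - log s ≤ log s⁻¹ := by
      rw [log_inv]; linarith [log_nonpos (hs0.trans_le hs.2).le hR]
    _ ≤ s⁻¹ ^ ε / ε := log_le_rpow_div (inv_nonneg.2 hs0.le) hε
    _ = s ^ (-ε) / ε := by rw [inv_rpow hs0.le, rpow_neg hs0.le]
  calc f s ≤ f R + C * (log R - log s) := le_add_mul_log_sub_log_of_hasDerivAt hf hf' hs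
    _ ≤ f R * s ^ (-ε) + C * (s ^ (-ε) / ε) :=
      add_le_add (le_mul_of_one_le_right hfR hpow) (mul_le_mul_of_nonneg_left hlog hC)
    _ = (f R + C / ε) * s ^ (-ε) := by ring

lemma mul_div_rpow_le_of_le_mul_rpow {q B w s : ℝ} (hq : 0 < q) (hs : 0 < s) (hw0 : 0 ≤ w)
    (hw : w ≤ B * s ^ (-((2 - q) / (2 * q)))) :
    s * (w / s) ^ q ≤ B ^ q * s ^ (-(q / 2)) := by
  have hB : 0 ≤ B := nonneg_of_mul_nonneg_left (hw0.trans hw) (rpow_pos_of_pos hs _)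
  calc s * (w / s) ^ q ≤ s * (B * s ^ (-((2 - q) / (2 * q))) / s) ^ q := by gcongr
    _ = B ^ q * s ^ (1 + (-((2 - q) / (2 * q)) + -1) * q) := by
      rw [div_eq_mul_inv, ← rpow_neg_one, mul_assoc, ← rpow_add hs,
        mul_rpow hB (rpow_nonneg hs.le _), ← rpow_mul hs.le, rpow_add hs, rpow_one]
      ring
    _ = B ^ q * s ^ (-(q / 2)) := by congr 2; field_simp; ring

lemma antitoneOn_sub_mul_rpow_of_hasDerivAt {f f' : ℝ → ℝ} {K κ R : ℝ} (hκ : 0 < κ)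
    (hf : ∀ x ∈ Ioc 0 R, HasDerivAt f (f' x) x) (hf' : ∀ x ∈ Ioo 0 R, f' x ≤ K * x ^ (κ - 1)) :
    AntitoneOn (fun x => f x - K / κ * x ^ κ) (Ioc 0 R) := by
  have hmono : MonotoneOn (fun x => K / κ * x ^ κ - f x) (Ioc 0 R) :=
    monotoneOn_Ioc_of_hasDerivAt_nonneg
      (fun x hx => ((hasDerivAt_rpow_const (Or.inl hx.1.ne')).const_mul _).sub (hf x hx))
      (fun x hx => by
        have := hf' x hx
        have hK : K / κ * (κ * x ^ (κ - 1)) = K * x ^ (κ - 1) := by field_simp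
        rw [hK]
        linarith)
  intro x hx y hy hxy
  have : K / κ * x ^ κ - f x ≤ K / κ * y ^ κ - f y := hmono hx hy hxy
  linarith

lemma le_of_le_neg_mul_deriv_of_le_log {u u' : ℝ → ℝ} {μ β Λ ρ : ℝ} (hρ : 0 < ρ)
    (hu : ∀ x ∈ Ioc 0 ρ, HasDerivAt u (u' x) x) (hμ : ∀ x ∈ Ioo 0 ρ, μ ≤ -(x * u' x))
    (hbound : ∀ x ∈ Ioc 0 ρ, u x ≤ β * log (1 / x) + Λ) : μ ≤ β := by
  have hmono : MonotoneOn (fun x => -(u x + μ * log x)) (Ioc 0 ρ) :=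
    monotoneOn_Ioc_of_hasDerivAt_nonneg
      (fun x hx => ((hu x hx).add ((hasDerivAt_log hx.1.ne').const_mul μ)).neg)
      (fun x hx => by
        have := hμ x hx
        have hμx : x * (μ * x⁻¹) = μ := by rw [mul_left_comm, mul_inv_cancel₀ hx.1.ne', mul_one]
        rw [neg_nonneg, ← mul_le_mul_iff_right₀ hx.1, mul_zero, mul_add, hμx]
        linarith)
  by_contra! hβμ
  have htendsto : Tendsto (fun x => (μ - β) * -log x) (𝓝[>] 0) atTop :=
    (tendsto_neg_atBot_atTop.comp tendsto_log_nhdsGT_zero).const_mul_atTop (sub_pos.2 hβμ)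
  obtain ⟨x, hlarge, hx⟩ :=
    ((htendsto.eventually_gt_atTop (Λ - u ρ - μ * log ρ)).and (Ioc_mem_nhdsGT hρ)).exists
  have hx_ge : -(u x + μ * log x) ≤ -(u ρ + μ * log ρ) := hmono hx ⟨hρ, le_rfl⟩ hx.2
  have hx_le : u x ≤ β * -log x + Λ := by simpa only [one_div, log_inv] using hbound x hx
  have hlarge : Λ - u ρ - μ * log ρ < (μ - β) * -log x := hlarge
  linarith

section RadialSolution

variable {m a b q Λ : ℝ} {u : ℝ → ℝ}

lemma mul_mul_exp_le_of_le_log {r v : ℝ} (ha : 0 ≤ a) (hb : 0 < b) (hr : 0 < r)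
    (hv : v ≤ 2 / b * log (1 / r) + Λ) : a * r * exp (b * v) ≤ a * exp (b * Λ) / r := by
  have hexp : exp (b * v) ≤ r⁻¹ ^ 2 * exp (b * Λ) := calc
    exp (b * v) ≤ exp (2 * log r⁻¹ + b * Λ) := by
      rw [exp_le_exp, ← one_div]
      have := mul_le_mul_of_nonneg_left hv hb.le
      rwa [mul_add, ← mul_assoc, mul_div_cancel₀ _ hb.ne'] at this
    _ = r⁻¹ ^ 2 * exp (b * Λ) := by
      rw [exp_add, mul_comm 2, exp_mul, exp_log (inv_pos.2 hr)]
      norm_cast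
  calc a * r * exp (b * v) ≤ a * r * (r⁻¹ ^ 2 * exp (b * Λ)) := by gcongr
    _ = a * exp (b * Λ) / r := by field_simp

lemma hasDerivAt_neg_mul_deriv (hu : ContDiffOn ℝ 2 u (Ioo 0 1))
    (heq : ∀ r ∈ Ioo (0 : ℝ) 1,
      -(deriv (deriv u) r) - deriv u r / r + a * exp (b * u r) - m * |deriv u r| ^ q = 0)
    {r : ℝ} (hr : r ∈ Ioo 0 1) :
    HasDerivAt (fun s => -(s * deriv u s)) (m * r * |deriv u r| ^ q - a * r * exp (b * u r)) r := by
  have hu' : ContDiffOn ℝ 1 (deriv u) (Ioo 0 1) := hu.deriv_of_isOpen isOpen_Ioo (by norm_num)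
  have hu'' := ((hu'.differentiableOn one_ne_zero).differentiableAt (isOpen_Ioo.mem_nhds hr)).hasDerivAt
  refine ((hasDerivAt_id r).mul hu'').neg.congr_deriv ?_
  have hdiv : deriv u r / r * r = deriv u r := div_mul_cancel₀ _ hr.1.ne'
  simp only [id_eq, one_mul]
  linear_combination r * heq r hr + hdiv

theorem exists_antitoneOn_neg_mul_deriv_sub_rpow (hm : 0 ≤ m) (ha : 0 ≤ a) (hb : 0 < b)
    (hq : 0 < q) (hq2 : q < 2) (hu : ContDiffOn ℝ 2 u (Ioo 0 1))
    (hneg : ∀ r ∈ Ioo (0 : ℝ) 1, deriv u r ≤ 0)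
    (heq : ∀ r ∈ Ioo (0 : ℝ) 1,
      -(deriv (deriv u) r) - deriv u r / r + a * exp (b * u r) - m * |deriv u r| ^ q = 0)
    (hap : ∀ r ∈ Ioo (0 : ℝ) 1, u r ≤ 2 / b * log (1 / r) + Λ)
    {r₀ : ℝ} (hr₀ : r₀ ∈ Ioo 0 1) :
    ∃ D ≥ 0, AntitoneOn (fun x => -(x * deriv u x) - D * x ^ (1 - q / 2)) (Ioc 0 r₀) := by
  set w : ℝ → ℝ := fun x => -(x * deriv u x)
  have hIoc : ∀ {x}, x ∈ Ioc 0 r₀ → x ∈ Ioo (0 : ℝ) 1 := fun hx => ⟨hx.1, hx.2.trans_lt hr₀.2⟩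
  have hw0 : ∀ {x}, x ∈ Ioo (0 : ℝ) 1 → 0 ≤ w x := fun hx =>
    neg_nonneg.2 (mul_nonpos_of_nonneg_of_nonpos hx.1.le (hneg _ hx))
  have hw := fun x (hx : x ∈ Ioc 0 r₀) => hasDerivAt_neg_mul_deriv hu heq (hIoc hx)
  have hε : 0 < (2 - q) / (2 * q) := by apply div_pos <;> linarith
  set B := w r₀ + a * exp (b * Λ) / ((2 - q) / (2 * q))
  have hpow : ∀ x ∈ Ioc 0 r₀, w x ≤ B * x ^ (-((2 - q) / (2 * q))) := fun x hx =>
    le_mul_rpow_neg_of_hasDerivAt (mul_nonneg ha (exp_pos _).le) hr₀.2.le hε (hw0 hr₀) hw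
      (fun y hy => by
        have hy1 : y ∈ Ioo (0 : ℝ) 1 := hIoc (Ioo_subset_Ioc_self hy)
        have := mul_mul_exp_le_of_le_log ha hb hy.1 (hap y hy1)
        have : 0 ≤ m * y * |deriv u y| ^ q :=
          mul_nonneg (mul_nonneg hm hy.1.le) (rpow_nonneg (abs_nonneg _) _)
        linarith) hx
  have hgrowth : ∀ x ∈ Ioo 0 r₀, m * x * |deriv u x| ^ q - a * x * exp (b * u x)
      ≤ m * B ^ q * x ^ (1 - q / 2 - 1) := fun x hx => by
    have hx1 : x ∈ Ioo (0 : ℝ) 1 := hIoc (Ioo_subset_Ioc_self hx)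
    have habs : |deriv u x| = w x / x := by
      rw [abs_of_nonpos (hneg x hx1)]
      show -deriv u x = -(x * deriv u x) / x
      rw [neg_div, mul_div_cancel_left₀ _ hx.1.ne']
    have := mul_div_rpow_le_of_le_mul_rpow hq hx.1 (hw0 hx1)
      (hpow x (Ioo_subset_Ioc_self hx))
    have : 0 ≤ a * x * exp (b * u x) := mul_nonneg (mul_nonneg ha hx.1.le) (exp_pos _).le
    rw [habs, sub_sub_cancel_left]
    nlinarith
  have hB : 0 ≤ B := add_nonneg (hw0 hr₀) (div_nonneg (mul_nonneg ha (exp_pos _).le) hε.le)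
  exact ⟨m * B ^ q / (1 - q / 2), div_nonneg (mul_nonneg hm (rpow_nonneg hB _)) (by linarith),
    antitoneOn_sub_mul_rpow_of_hasDerivAt (by linarith) hw hgrowth⟩

end RadialSolution

theorem stmt7_general (m a b q Λ : ℝ) (hm : 0 < m) (ha : 0 < a) (hb : 0 < b)
    (hq1 : 1 < q) (hq2 : q < 2)
    (u : ℝ → ℝ) (hu : ContDiffOn ℝ 2 u (Set.Ioo 0 1))
    (hdec : StrictAntiOn u (Set.Ioc 0 1))
    (heq : ∀ r ∈ Set.Ioo (0 : ℝ) 1,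
      -(deriv (deriv u) r) - deriv u r / r + a * Real.exp (b * u r) - m * |deriv u r| ^ q = 0)
    (hap : ∀ r ∈ Set.Ioo (0 : ℝ) 1, u r ≤ (2 / b) * Real.log (1 / r) + Λ) :
    ∀ r₀ ∈ Set.Ioo (0 : ℝ) 1, ∃ c > 0, ∀ r ∈ Set.Ioc (0 : ℝ) r₀, |deriv u r| ≤ c / r := by
  have hneg : ∀ r ∈ Ioo (0 : ℝ) 1, deriv u r ≤ 0 := fun r hr => by
    rw [← derivWithin_of_isOpen isOpen_Ioo hr]
    exact (hdec.mono Ioo_subset_Ioc_self).antitoneOn.derivWithin_nonpos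
  have hdu : ∀ r ∈ Ioo (0 : ℝ) 1, HasDerivAt u (deriv u r) r := fun r hr =>
    ((hu.differentiableOn two_ne_zero).differentiableAt (isOpen_Ioo.mem_nhds hr)).hasDerivAt
  intro r₀ hr₀
  obtain ⟨D, hD, hanti⟩ :=
    exists_antitoneOn_neg_mul_deriv_sub_rpow hm.le ha.le hb (by linarith) hq2 hu hneg heq hap hr₀
  refine ⟨2 / b + D + 1, by linarith [div_pos two_pos hb], fun ρ hρ => ?_⟩
  have hρ1 : ρ < 1 := hρ.2.trans_lt hr₀.2
  have hIoc : ∀ {x}, x ∈ Ioc 0 ρ → x ∈ Ioo (0 : ℝ) 1 := fun hx => ⟨hx.1, hx.2.trans_lt hρ1⟩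
  have hμ : -(ρ * deriv u ρ) - D * ρ ^ (1 - q / 2) ≤ 2 / b := by
    refine le_of_le_neg_mul_deriv_of_le_log hρ.1 (fun x hx => hdu x (hIoc hx)) (fun x hx => ?_)
      (fun x hx => hap x (hIoc hx))
    have hx_ge : -(ρ * deriv u ρ) - D * ρ ^ (1 - q / 2) ≤ -(x * deriv u x) - D * x ^ (1 - q / 2) :=
      hanti ⟨hx.1, hx.2.le.trans hρ.2⟩ hρ hx.2.le
    have : 0 ≤ D * x ^ (1 - q / 2) := mul_nonneg hD (rpow_nonneg hx.1.le _)
    linarith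
  have hρκ : D * ρ ^ (1 - q / 2) ≤ D :=
    mul_le_of_le_one_right hD (rpow_le_one hρ.1.le hρ1.le (by linarith))
  rw [abs_of_nonpos (hneg ρ (hIoc ⟨hρ.1, le_rfl⟩)), le_div_iff₀ hρ.1]
  linarith

/-- Let `1 < q < 2`. If `u ≥ 0` is a `C²` radial decreasing solution of
`-u'' - u'/r + a e^{bu} - m|u'|^q = 0` on `(0,1)` satisfying the a priori bound
`u(r) ≤ (2/b)ln(1/r) + Λ`, then for every `r₀ ∈ (0,1)` there is `c > 0` with
`|u'(r)| ≤ c/r` on `(0,r₀]`. -/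
theorem stmt7 (m a b q Λ : ℝ) (hm : 0 < m) (ha : 0 < a) (hb : 0 < b)
    (hq1 : 1 < q) (hq2 : q < 2)
    (u : ℝ → ℝ) (hu : ContDiffOn ℝ 2 u (Set.Ioo 0 1))
    (hdec : StrictAntiOn u (Set.Ioc 0 1))
    (hpos : ∀ r ∈ Set.Ioc (0 : ℝ) 1, 0 ≤ u r)
    (heq : ∀ r ∈ Set.Ioo (0 : ℝ) 1,
      -(deriv (deriv u) r) - deriv u r / r + a * Real.exp (b * u r) - m * |deriv u r| ^ q = 0)
    (hap : ∀ r ∈ Set.Ioo (0 : ℝ) 1, u r ≤ (2 / b) * Real.log (1 / r) + Λ) :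
    ∀ r₀ ∈ Set.Ioo (0 : ℝ) 1, ∃ c > 0, ∀ r ∈ Set.Ioc (0 : ℝ) r₀, |deriv u r| ≤ c / r :=
  stmt7_general m a b q Λ hm ha hb hq1 hq2 u hu hdec heq hap
end

section
/- Let β ∈ (0,1) and X : (-∞, 0] → [0,∞) be a bounded C² function satisfying -X''(t) + X(t) ≤ L e^{βt} for all t ≤ 0, for some L ≥ 0. Then there exists C > 0 such that X(t) ≤ C e^{βt} for all t ≤ 0. -/
/-!
Comparison with the barrier `g_ε(t) = X t - C e^{βt} - ε e^{-t}`. Since `β² < 1`, for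
`C(1 - β²) ≥ L` the inequality gives `g_ε'' ≥ g_ε`, so `g_ε` has no positive interior maximum.
Choosing `C ≥ X 0` makes `g_ε(0) < 0`, and boundedness of `X` makes `g_ε → -∞` at `-∞`;
hence `g_ε ≤ 0` on `(-∞, 0]` for every `ε > 0`, and `ε → 0` gives `X t ≤ C e^{βt}`.
-/

open Real Set Filter Topology

lemma not_isLocalMax_of_deriv_deriv_pos {f : ℝ → ℝ} {x₀ : ℝ} (hf : 0 < deriv (deriv f) x₀)
    (hc : ContinuousAt f x₀) : ¬IsLocalMax f x₀ := fun hmax => by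
  have hmin := isLocalMin_of_deriv_deriv_pos hf hmax.deriv_eq_zero hc
  have hconst : f =ᶠ[𝓝 x₀] fun _ => f x₀ :=
    (hmax.and hmin).mono fun _ hx => le_antisymm hx.1 hx.2
  simp [hconst.deriv.deriv_eq] at hf

lemma nonpos_on_Icc_of_deriv_deriv_pos {g : ℝ → ℝ} {a b : ℝ} (hg : ContinuousOn g (Icc a b))
    (hpos : ∀ t ∈ Ioo a b, 0 < g t → 0 < deriv (deriv g) t) (ha : g a ≤ 0) (hb : g b ≤ 0) :
    ∀ t ∈ Icc a b, g t ≤ 0 := by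
  by_contra! ⟨s, hs, hgs⟩
  obtain ⟨t₀, ht₀, hmax⟩ := isCompact_Icc.exists_isMaxOn ⟨s, hs⟩ hg
  have hgt₀ : 0 < g t₀ := hgs.trans_le (hmax hs)
  have ht₀' : t₀ ∈ Ioo a b :=
    ⟨ht₀.1.lt_of_ne (by rintro rfl; linarith), ht₀.2.lt_of_ne (by rintro rfl; linarith)⟩
  have hnhds : Icc a b ∈ 𝓝 t₀ := Icc_mem_nhds ht₀'.1 ht₀'.2
  exact not_isLocalMax_of_deriv_deriv_pos (hpos t₀ ht₀' hgt₀) (hg.continuousAt hnhds)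
    (hmax.isLocalMax hnhds)

lemma nonpos_on_Iic_of_deriv_deriv_pos {g : ℝ → ℝ} {b : ℝ} (hg : ContinuousOn g (Iic b))
    (hpos : ∀ t < b, 0 < g t → 0 < deriv (deriv g) t) (hb : g b ≤ 0)
    (hbot : ∃ᶠ a in atBot, g a ≤ 0) : ∀ t ≤ b, g t ≤ 0 := by
  intro t ht
  obtain ⟨a, hat, ha⟩ := frequently_atBot.1 hbot t
  exact nonpos_on_Icc_of_deriv_deriv_pos (hg.mono Icc_subset_Iic_self)
    (fun s hs => hpos s hs.2) ha hb t ⟨hat, ht⟩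

lemma deriv_deriv_eq_iteratedDeriv_two (f : ℝ → ℝ) : deriv (deriv f) = iteratedDeriv 2 f := by
  simp [iteratedDeriv_succ]

lemma deriv_deriv_sub_mul_exp_sub_mul_exp {X : ℝ → ℝ} {t : ℝ} (hX : ContDiffAt ℝ 2 X t)
    (C β ε : ℝ) :
    deriv (deriv fun s => X s - C * exp (β * s) - ε * exp (-s)) t =
      deriv (deriv X) t - C * β ^ 2 * exp (β * t) - ε * exp (-t) := by
  have hexp (c a : ℝ) : ContDiffAt ℝ 2 (fun s => a * exp (c * s)) t := by fun_prop
  have hneg (s : ℝ) : exp (-s) = exp (-1 * s) := by rw [neg_one_mul]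
  simp only [deriv_deriv_eq_iteratedDeriv_two, hneg]
  rw [iteratedDeriv_fun_sub (hX.sub (hexp β C)) (hexp (-1) ε),
    iteratedDeriv_fun_sub hX (hexp β C), iteratedDeriv_const_mul_field,
    iteratedDeriv_const_mul_field, iteratedDeriv_exp_const_mul, iteratedDeriv_exp_const_mul]
  ring

theorem le_mul_exp_of_neg_deriv_deriv_add_le {X : ℝ → ℝ} {β L C M : ℝ}
    (hX : ContDiffOn ℝ 2 X (Iic 0)) (hM : ∀ t ≤ (0 : ℝ), X t ≤ M)
    (hineq : ∀ t < (0 : ℝ), -deriv (deriv X) t + X t ≤ L * exp (β * t))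
    (hC : 0 ≤ C) (hCL : L ≤ C * (1 - β ^ 2)) (hC0 : X 0 ≤ C) :
    ∀ t ≤ (0 : ℝ), X t ≤ C * exp (β * t) := by
  have hbarrier : ∀ ε > 0, ∀ t ≤ (0 : ℝ), X t - C * exp (β * t) - ε * exp (-t) ≤ 0 := by
    intro ε hε
    have hXc := hX.continuousOn
    refine nonpos_on_Iic_of_deriv_deriv_pos (by fun_prop) (fun t ht hgt => ?_) ?_ ?_
    · -- `g'' - g ≥ (C (1 - β²) - L) e^{βt} ≥ 0`
      rw [deriv_deriv_sub_mul_exp_sub_mul_exp (hX.contDiffAt (Iic_mem_nhds ht))]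
      nlinarith [hineq t ht, mul_nonneg (sub_nonneg.2 hCL) (exp_pos (β * t)).le]
    · simp only [mul_zero, neg_zero, exp_zero, mul_one]
      linarith
    · have hexp : Tendsto (fun t => ε * exp (-t)) atBot atTop :=
        (tendsto_exp_atTop.comp tendsto_neg_atBot_atTop).const_mul_atTop hε
      refine Eventually.frequently ?_
      filter_upwards [hexp.eventually_ge_atTop M, eventually_le_atBot 0] with t hεt ht
      nlinarith [hM t ht, exp_pos (β * t)]
  intro t ht
  refine le_of_forall_pos_le_add fun δ hδ => ?_
  have := hbarrier (δ * exp t) (by positivity) t ht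
  rw [mul_assoc, ← exp_add, add_neg_cancel, exp_zero, mul_one] at this
  linarith

theorem stmt13_general (β L : ℝ) (hβ : 0 < β) (hβ1 : β < 1) (X : ℝ → ℝ)
    (hX : ContDiffOn ℝ 2 X (Set.Iic 0))
    (hbdd : ∃ M, ∀ t ≤ (0 : ℝ), X t ≤ M)
    (hineq : ∀ t ≤ (0 : ℝ), -(deriv (deriv X) t) + X t ≤ L * Real.exp (β * t)) :
    ∃ C > 0, ∀ t ≤ (0 : ℝ), X t ≤ C * Real.exp (β * t) := by
  obtain ⟨M, hM⟩ := hbdd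
  have hβ2 : 0 < 1 - β ^ 2 := by nlinarith
  set C := max (L / (1 - β ^ 2)) (max (X 0) 1)
  have hC1 : 1 ≤ C := le_max_of_le_right (le_max_right _ _)
  refine ⟨C, by linarith, le_mul_exp_of_neg_deriv_deriv_add_le hX hM (fun t ht => hineq t ht.le)
    (by linarith) ?_ (le_max_of_le_right (le_max_left _ _))⟩
  rw [← div_le_iff₀ hβ2]
  exact le_max_left _ _

/-- If `0 < β < 1` and `X ≥ 0` is bounded, `C²` on `(-∞,0]` with `-X'' + X ≤ L e^{βt}`,
then `X(t) ≤ C e^{βt}` for some `C > 0`. -/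
theorem stmt13 (β L : ℝ) (hβ : 0 < β) (hβ1 : β < 1) (hL : 0 ≤ L) (X : ℝ → ℝ)
    (hX : ContDiffOn ℝ 2 X (Set.Iic 0))
    (hXnn : ∀ t ≤ (0 : ℝ), 0 ≤ X t)
    (hbdd : ∃ M, ∀ t ≤ (0 : ℝ), X t ≤ M)
    (hineq : ∀ t ≤ (0 : ℝ), -(deriv (deriv X) t) + X t ≤ L * Real.exp (β * t)) :
    ∃ C > 0, ∀ t ≤ (0 : ℝ), X t ≤ C * Real.exp (β * t) :=
  stmt13_general β L hβ hβ1 X hX hbdd hineq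
end

section
/- Let u be a C² radial function on the punctured disk, with w(t) = u(e^t) for t ≤ 0 satisfying -w'' + a e^{bw+2t} - m e^{(2-q)t}|w'|^q = 0, where q > 2, m, a, b > 0. Suppose there exist constants K, K' such that -(2/b)t - K ln(1-t) - K' ≤ w(t) ≤ -(q/b)t + K' for all t ≤ 0, and that w' is monotone near -∞. Then w'(t) → -q/b as t → -∞, and consequently w(t)/(-t) → q/b. -/
/-!
Near `-∞` the derivative `w'` is monotone, so comparing `w'(t)` with slopes of chords of `w`
towards `-∞` and using the linear-growth bounds on `w` bounds `w'` on the side where it is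
monotone: `w' ≥ -q/b` if it is nondecreasing, `w' ≤ -2/b` if it is nonincreasing. Hence `w'` has a
finite limit `L`, then `w(t)/t → L` too, and the lower bound forces `L ≤ -2/b < 0`.
By the mean value theorem there are `ξₙ → -∞` with `w''(ξₙ) → 0`. Multiplied by `e^{(q-2)t}` the
equation reads `a e^{bw + qt} = w'' e^{(q-2)t} + m |w'|^q`, whose right side tends to `m |L|^q > 0`
along `ξₙ` since `q > 2`; taking logarithms, `w(ξₙ)/ξₙ → -q/b`, so `L = -q/b`.
-/

open Real Filter Set Topology Asymptotics

theorem le_deriv_of_monotoneOn_deriv {f φ : ℝ → ℝ} {t c : ℝ}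
    (hcont : ContinuousOn f (Iic t)) (hdiff : ∀ s < t, DifferentiableAt ℝ f s)
    (hmono : MonotoneOn (deriv f) (Iic t)) (hφ : ∀ s ≤ t, f s ≤ φ s)
    (hφ_lim : Tendsto (fun s => φ s / s) atBot (𝓝 c)) : c ≤ deriv f t := by
  have hlhs : Tendsto (fun s => φ s / s - f t / s) atBot (𝓝 (c - 0)) :=
    hφ_lim.sub (tendsto_const_nhds.div_atBot tendsto_id)
  have hrhs : Tendsto (fun s => deriv f t * (1 - t / s)) atBot (𝓝 (deriv f t * (1 - 0))) :=
    (tendsto_const_nhds.sub (tendsto_const_nhds.div_atBot tendsto_id)).const_mul _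
  rw [sub_zero] at hlhs
  rw [sub_zero, mul_one] at hrhs
  refine le_of_tendsto_of_tendsto hlhs hrhs ?_
  filter_upwards [eventually_lt_atBot (min t 0)] with s hs
  have hst : s < t := hs.trans_le (min_le_left _ _)
  have hs0 : s < 0 := hs.trans_le (min_le_right _ _)
  obtain ⟨ξ, hξ, hξ_eq⟩ := exists_deriv_eq_slope f hst (hcont.mono Icc_subset_Iic_self)
    fun x hx => (hdiff x hx.2).differentiableWithinAt
  have hslope : f t - f s ≤ deriv f t * (t - s) := by
    rw [← div_le_iff₀ (sub_pos.2 hst), ← hξ_eq]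
    exact hmono hξ.2.le (mem_Iic.2 le_rfl) hξ.2.le
  have hkey : deriv f t * (s - t) ≤ φ s - f t := by nlinarith [hφ s hst.le]
  calc φ s / s - f t / s = (φ s - f t) / s := by ring
    _ ≤ deriv f t * (s - t) / s := div_le_div_of_nonpos_of_le hs0.le hkey
    _ = deriv f t * (1 - t / s) := by rw [mul_div_assoc, sub_div, div_self hs0.ne]

theorem MonotoneOn.exists_tendsto_atBot {f : ℝ → ℝ} {T c : ℝ} (hf : MonotoneOn f (Iic T))
    (hc : ∀ t ≤ T, c ≤ f t) : ∃ L, Tendsto f atBot (𝓝 L) := by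
  have hmono : Monotone fun t => f (min t T) := fun s t hst =>
    hf (mem_Iic.2 (min_le_right _ _)) (mem_Iic.2 (min_le_right _ _)) (min_le_min_right T hst)
  have hbdd : BddBelow (range fun t => f (min t T)) := by
    refine ⟨c, ?_⟩
    rintro _ ⟨t, rfl⟩
    exact hc _ (min_le_right _ _)
  refine ⟨_, (tendsto_atBot_ciInf hmono hbdd).congr' ?_⟩
  filter_upwards [eventually_le_atBot T] with t ht
  rw [min_eq_left ht]

theorem exists_tendsto_deriv_atBot_of_monotoneOn {f φ ψ : ℝ → ℝ} {T c₁ c₂ : ℝ}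
    (hcont : ContinuousOn f (Iic T)) (hdiff : ∀ t < T, DifferentiableAt ℝ f t)
    (hφ : ∀ t ≤ T, φ t ≤ f t) (hψ : ∀ t ≤ T, f t ≤ ψ t)
    (hφ_lim : Tendsto (fun t => φ t / t) atBot (𝓝 c₁))
    (hψ_lim : Tendsto (fun t => ψ t / t) atBot (𝓝 c₂))
    (hmono : MonotoneOn (deriv f) (Iic T) ∨ AntitoneOn (deriv f) (Iic T)) :
    ∃ L, Tendsto (deriv f) atBot (𝓝 L) := by
  rcases hmono with hmono | hanti
  · refine hmono.exists_tendsto_atBot (c := c₂) fun t ht => ?_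
    exact le_deriv_of_monotoneOn_deriv (hcont.mono (Iic_subset_Iic.2 ht))
      (fun s hs => hdiff s (hs.trans_le ht)) (hmono.mono (Iic_subset_Iic.2 ht))
      (fun s hs => hψ s (hs.trans ht)) hψ_lim
  · have hneg : MonotoneOn (deriv (-f)) (Iic T) := by
      rw [deriv.neg']
      exact hanti.neg
    have hbound : ∀ t ≤ T, -c₁ ≤ deriv (-f) t := fun t ht =>
      le_deriv_of_monotoneOn_deriv (hcont.neg.mono (Iic_subset_Iic.2 ht))
        (fun s hs => (hdiff s (hs.trans_le ht)).neg) (hneg.mono (Iic_subset_Iic.2 ht))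
        (fun s hs => neg_le_neg (hφ s (hs.trans ht)))
        (by simpa only [Pi.neg_apply, neg_div] using hφ_lim.neg)
    obtain ⟨L, hL⟩ := hneg.exists_tendsto_atBot hbound
    refine ⟨-L, ?_⟩
    simpa only [deriv.neg', neg_neg] using hL.neg

theorem isLittleO_id_atBot_of_tendsto_deriv {g : ℝ → ℝ}
    (hdiff : ∀ᶠ t in atBot, DifferentiableAt ℝ g t) (hg' : Tendsto (deriv g) atBot (𝓝 0)) :
    g =o[atBot] id := by
  refine isLittleO_iff.2 fun ε hε => ?_
  obtain ⟨T, hT⟩ := eventually_atBot.1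
    (hdiff.and (hg'.eventually (Metric.closedBall_mem_nhds 0 (half_pos hε))))
  have hlip : ∀ t ≤ T, ‖g T - g t‖ ≤ ε / 2 * ‖T - t‖ := fun t ht =>
    (convex_Iic T).norm_image_sub_le_of_norm_deriv_le (fun s hs => (hT s hs).1)
      (fun s hs => by simpa using (hT s hs).2) ht (mem_Iic.2 le_rfl)
  filter_upwards [eventually_le_atBot T,
    tendsto_abs_atBot_atTop.eventually_ge_atTop (2 / ε * ‖g T‖ + ‖T‖)] with t ht hlarge
  rw [← Real.norm_eq_abs] at hlarge
  have hmul : 2 * ‖g T‖ + ε * ‖T‖ ≤ ε * ‖t‖ := by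
    have hcancel : ε * (2 / ε * ‖g T‖) = 2 * ‖g T‖ := by field_simp
    nlinarith
  calc ‖g t‖ ≤ ‖g T‖ + ‖g T - g t‖ := norm_le_norm_add_norm_sub _ _
    _ ≤ ‖g T‖ + ε / 2 * (‖T‖ + ‖t‖) := by
      gcongr
      exact (hlip t ht).trans (by gcongr; exact norm_sub_le _ _)
    _ ≤ ε * ‖id t‖ := by rw [id]; linarith

theorem tendsto_div_atBot_of_tendsto_deriv {f : ℝ → ℝ} {L : ℝ}
    (hdiff : ∀ᶠ t in atBot, DifferentiableAt ℝ f t) (hf' : Tendsto (deriv f) atBot (𝓝 L)) :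
    Tendsto (fun t => f t / t) atBot (𝓝 L) := by
  have hderiv : ∀ᶠ t in atBot, HasDerivAt (fun t => f t - L * t) (deriv f t - L) t := by
    filter_upwards [hdiff] with t ht
    exact (ht.hasDerivAt.sub ((hasDerivAt_id t).const_mul L)).congr_deriv (by ring)
  have hlo : (fun t => f t - L * t) =o[atBot] id := by
    refine isLittleO_id_atBot_of_tendsto_deriv
      (hderiv.mono fun t ht => ht.differentiableAt) ?_
    have := hf'.sub_const L
    rw [sub_self] at this
    exact this.congr' (hderiv.mono fun t ht => ht.deriv.symm)
  have := hlo.tendsto_div_nhds_zero.const_add L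
  rw [add_zero] at this
  refine this.congr' ?_
  filter_upwards [eventually_lt_atBot 0] with t ht
  rw [id, sub_div, mul_div_cancel_right₀ _ ht.ne, add_sub_cancel]

theorem tendsto_mul_add_div_self (c : ℝ) {g : ℝ → ℝ} (hg : g =o[atBot] id) :
    Tendsto (fun t => (c * t + g t) / t) atBot (𝓝 c) := by
  have := hg.tendsto_div_nhds_zero.const_add c
  rw [add_zero] at this
  refine this.congr' ?_
  filter_upwards [eventually_lt_atBot 0] with t ht
  rw [id, add_div, mul_div_cancel_right₀ _ ht.ne]

theorem isLittleO_log_one_sub_atBot : (fun t => log (1 - t)) =o[atBot] id := by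
  have h := isLittleO_log_id_atTop.comp_tendsto
    (tendsto_atTop_add_const_left atBot 1 tendsto_neg_atBot_atTop)
  refine h.trans_isBigO (isBigO_iff.2 ⟨2, ?_⟩)
  filter_upwards [eventually_le_atBot (-1)] with t ht
  simp only [Function.comp, id, Real.norm_eq_abs]
  rw [abs_of_nonneg (by linarith), abs_of_nonpos (by linarith)]
  linarith

theorem exists_seq_tendsto_atBot_deriv_tendsto_zero {f : ℝ → ℝ} {L : ℝ}
    (hdiff : ∀ᶠ t in atBot, DifferentiableAt ℝ f t) (hf : Tendsto f atBot (𝓝 L)) :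
    ∃ ξ : ℕ → ℝ, Tendsto ξ atTop atBot ∧ Tendsto (fun n => deriv f (ξ n)) atTop (𝓝 0) := by
  obtain ⟨T, hT⟩ := eventually_atBot.1 hdiff
  have hright : Tendsto (fun n : ℕ => T - n) atTop atBot :=
    tendsto_atBot_add_const_left _ T (tendsto_neg_atTop_atBot.comp tendsto_natCast_atTop_atTop)
  have hleft : Tendsto (fun n : ℕ => T - n - 1) atTop atBot :=
    tendsto_atBot_add_const_right _ (-1) hright
  have hmvt : ∀ n : ℕ, ∃ ξ ∈ Ioo (T - n - 1) (T - n),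
      deriv f ξ = f (T - n) - f (T - n - 1) := by
    intro n
    have hsub : ∀ x ∈ Icc (T - n - 1) (T - n), x ≤ T := fun x hx =>
      hx.2.trans (sub_le_self _ n.cast_nonneg)
    obtain ⟨ξ, hξ, hξ_eq⟩ := exists_deriv_eq_slope f (sub_one_lt _)
      (fun x hx => (hT x (hsub x hx)).continuousAt.continuousWithinAt)
      (fun x hx => (hT x (hsub x (Ioo_subset_Icc_self hx))).differentiableWithinAt)
    exact ⟨ξ, hξ, by rw [hξ_eq, sub_sub_cancel, div_one]⟩
  choose ξ hξ hξ_eq using hmvt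
  refine ⟨ξ, tendsto_atBot_mono (fun n => (hξ n).2.le) hright, ?_⟩
  have := (hf.comp hright).sub (hf.comp hleft)
  rw [sub_self] at this
  exact this.congr fun n => (hξ_eq n).symm

theorem mul_exp_eq_of_radial_eq {a b m q t y y' y'' : ℝ}
    (h : -y'' + a * exp (b * y + 2 * t) - m * exp ((2 - q) * t) * |y'| ^ q = 0) :
    a * exp (b * y + q * t) = y'' * exp ((q - 2) * t) + m * |y'| ^ q := by
  have hsplit : exp (b * y + q * t) = exp (b * y + 2 * t) * exp ((q - 2) * t) := by
    rw [← exp_add]; ring_nf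
  have hinv : exp ((2 - q) * t) * exp ((q - 2) * t) = 1 := by
    rw [← exp_add, ← exp_zero]; ring_nf
  rw [hsplit, ← mul_assoc, show a * exp (b * y + 2 * t) =
    y'' + m * exp ((2 - q) * t) * |y'| ^ q by linarith]
  linear_combination m * |y'| ^ q * hinv

theorem tendsto_div_of_mul_exp_eq {α : Type*} {l : Filter α} {ξ y B : α → ℝ} {a b k B₀ : ℝ}
    (ha : 0 < a) (hb : 0 < b) (hB₀ : 0 < B₀) (hξ : Tendsto ξ l atBot)
    (hB : Tendsto B l (𝓝 B₀)) (h : ∀ᶠ n in l, a * exp (b * y n + k * ξ n) = B n) :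
    Tendsto (fun n => y n / ξ n) l (𝓝 (-(k / b))) := by
  have hrem : Tendsto (fun n => (log (B n) - log a) / b / ξ n) l (𝓝 0) :=
    (((hB.log hB₀.ne').sub_const _).div_const b).div_atBot hξ
  have := hrem.const_add (-(k / b))
  rw [add_zero] at this
  refine this.congr' ?_
  filter_upwards [h, hξ.eventually_ne_atBot 0] with n hn hξn
  rw [← hn, log_mul ha.ne' (exp_ne_zero _), log_exp]
  field_simp
  ring

/-- Let `q > 2` and `w(t) = u(e^t)` satisfy
`-w'' + a e^{bw+2t} - m e^{(2-q)t}|w'|^q = 0` on `(-∞,0]`, with two-sided bounds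
`-(2/b)t - K ln(1-t) - K' ≤ w(t) ≤ -(q/b)t + K'` and `w'` monotone near `-∞`. Then
`w'(t) → -q/b` and `w(t)/(-t) → q/b` as `t → -∞`. -/
theorem stmt15 (m a b q K K' : ℝ) (hm : 0 < m) (ha : 0 < a) (hb : 0 < b) (hq : 2 < q)
    (w : ℝ → ℝ) (hw : ContDiffOn ℝ 2 w (Set.Iic 0))
    (heq : ∀ t ≤ (0 : ℝ),
      -(deriv (deriv w) t) + a * Real.exp (b * w t + 2 * t) -
        m * Real.exp ((2 - q) * t) * |deriv w t| ^ q = 0)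
    (hlow : ∀ t ≤ (0 : ℝ), -(2 / b) * t - K * Real.log (1 - t) - K' ≤ w t)
    (hup : ∀ t ≤ (0 : ℝ), w t ≤ -(q / b) * t + K')
    (hmono : ∃ T ≤ (0 : ℝ),
      MonotoneOn (deriv w) (Set.Iic T) ∨ AntitoneOn (deriv w) (Set.Iic T)) :
    Tendsto (deriv w) atBot (nhds (-(q / b))) ∧
    Tendsto (fun t => w t / (-t)) atBot (nhds (q / b)) := by
  obtain ⟨T, hT0, hmono⟩ := hmono
  have hdiff : ∀ t < 0, DifferentiableAt ℝ w t := fun t ht =>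
    (hw.contDiffAt (Iic_mem_nhds ht)).differentiableAt (by norm_num)
  have hdiff' : ∀ t < 0, DifferentiableAt ℝ (deriv w) t := fun t ht =>
    (((hw.mono Iio_subset_Iic_self).deriv_of_isOpen isOpen_Iio (by norm_num)).contDiffAt
      (isOpen_Iio.mem_nhds ht)).differentiableAt one_ne_zero
  have hlow_lim : Tendsto (fun t => (-(2 / b) * t - K * log (1 - t) - K') / t) atBot
      (𝓝 (-(2 / b))) := by
    simpa only [sub_eq_add_neg, add_assoc] using tendsto_mul_add_div_self (-(2 / b))
      ((isLittleO_log_one_sub_atBot.const_mul_left K).neg_left.sub (isLittleO_const_id_atBot K'))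
  obtain ⟨L, hL⟩ := exists_tendsto_deriv_atBot_of_monotoneOn
    (hw.continuousOn.mono (Iic_subset_Iic.2 hT0)) (fun t ht => hdiff t (ht.trans_le hT0))
    (fun t ht => hlow t (ht.trans hT0)) (fun t ht => hup t (ht.trans hT0)) hlow_lim
    (tendsto_mul_add_div_self _ (isLittleO_const_id_atBot K')) hmono
  have hwL : Tendsto (fun t => w t / t) atBot (𝓝 L) :=
    tendsto_div_atBot_of_tendsto_deriv ((eventually_lt_atBot 0).mono hdiff) hL
  have hL_neg : L < 0 := by
    refine (le_of_tendsto_of_tendsto hwL hlow_lim ?_).trans_lt (by simp [hb])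
    filter_upwards [eventually_lt_atBot 0] with t ht
    exact div_le_div_of_nonpos_of_le ht.le (hlow t ht.le)
  obtain ⟨ξ, hξ, hw''ξ⟩ :=
    exists_seq_tendsto_atBot_deriv_tendsto_zero ((eventually_lt_atBot 0).mono hdiff') hL
  have hB : Tendsto (fun n => deriv (deriv w) (ξ n) * exp ((q - 2) * ξ n) +
      m * |deriv w (ξ n)| ^ q) atTop (𝓝 (m * |L| ^ q)) := by
    have hexp : Tendsto (fun n => exp ((q - 2) * ξ n)) atTop (𝓝 0) :=
      tendsto_exp_atBot.comp (hξ.const_mul_atBot (by linarith))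
    simpa using (hw''ξ.mul hexp).add
      (((hL.comp hξ).abs.rpow_const (Or.inr (by linarith))).const_mul m)
  have hwξ : Tendsto (fun n => w (ξ n) / ξ n) atTop (𝓝 (-(q / b))) :=
    tendsto_div_of_mul_exp_eq ha hb (mul_pos hm (rpow_pos_of_pos (abs_pos.2 hL_neg.ne) q)) hξ hB
      ((hξ.eventually_le_atBot 0).mono fun n hn => mul_exp_eq_of_radial_eq (heq _ hn))
  obtain rfl : L = -(q / b) := tendsto_nhds_unique (hwL.comp hξ) hwξ
  refine ⟨hL, ?_⟩
  simpa only [div_neg, neg_neg] using hwL.neg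
end
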